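/- arXiv:1310.0343 — 3 statements merged into one kernel-verified Lean document; each statement's English description precedes it below -/
import Mathlib

section
/- Let a_0, …, a_m be positive integers. In the group ring ℚ[ℂ*], define δ(a_0,…,a_m) = (-1)^{m+1}(1 - ∑_{j≥1} s_j E_j), where s_j are defined by Möbius inversion from χ_j(a_0,…,a_m) = 1 - ∏_{a_i | j}(1-a_i), and E_j = (1/j)∑_{k=0}^{j-1}[ζ_j^k]. Then δ(a_0,…,a_m) · δ(a_0',…,a_{m'}') = δ(a_0,…,a_m, a_0',…,a_{m'}'). -/
open ArithmeticFunction

/-- The primitive `j`-th root of unity `e^{2πi/j}` as a unit of `ℂ`. -/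
noncomputable def zetaU (j : ℕ) : ℂˣ :=
  Units.mk0 (Complex.exp (2 * (Real.pi : ℂ) * Complex.I / (j : ℂ))) (Complex.exp_ne_zero _)

/-- The averaging element `E_j = (1/j)∑_{k=0}^{j-1}[ζ_j^k]` in the group ring `ℚ[ℂ*]`. -/
noncomputable def Eavg (j : ℕ) : MonoidAlgebra ℚ ℂˣ :=
  (j : ℚ)⁻¹ • ∑ k ∈ Finset.range j, MonoidAlgebra.of ℚ ℂˣ (zetaU j ^ k)

/-- `χ_j` for a tuple of exponents `L`: `χ_j = 1 - ∏_{a ∈ L, a ∣ j}(1 - a)`. -/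
def chiL (L : List ℕ) (j : ℕ) : ℚ :=
  1 - ((L.filter (fun a => a ∣ j)).map (fun a => 1 - (a : ℚ))).prod

/-- `s_j`, defined from `χ_j` by Möbius inversion. -/
def sL (L : List ℕ) (j : ℕ) : ℚ :=
  ∑ d ∈ j.divisors, ((ArithmeticFunction.moebius (j / d) : ℤ) : ℚ) * chiL L d

/-- The least common multiple of the entries of `L`. -/
def lcmL (L : List ℕ) : ℕ := L.foldr Nat.lcm 1

/-- The Milnor–Orlik element `δ(a_0,…,a_m) = (-1)^{m+1}(1 - ∑_{j≥1} s_j E_j)` of `ℚ[ℂ*]`;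
the sum is finite since `s_j = 0` unless `j` divides the period `lcm_i a_i`. -/
noncomputable def deltaMO (L : List ℕ) : MonoidAlgebra ℚ ℂˣ :=
  ((-1 : ℚ) ^ L.length) •
    ((1 : MonoidAlgebra ℚ ℂˣ) - ∑ j ∈ (lcmL L).divisors, sL L j • Eavg j)

/-!
`E_j` is the average over the `j`-th roots of unity, and the `k`-th and `l`-th roots of unity
generate the `lcm(k, l)`-th ones, so `E_k E_l = E_{lcm(k, l)}`. Hence for functions `f` of
`gcd(M, n)` the element `T f = ∑_{j ∣ M} (μ ∗ f)(j) E_j` is multiplicative in `f`: the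
coefficient of `E_l` in `T f * T g` has divisor sums `f(n) g(n)`, so by Möbius inversion it is
`(μ ∗ f g)(l)`.
Since `δ(a) = ±(1 - T χ_a)` and `1 - χ_{a a'} = (1 - χ_a)(1 - χ_{a'})`, the product formula follows.
-/

open Finset

lemma sum_range_comp_succ_of_eq {A : Type*} [AddCommMonoid A] [IsRightCancelAdd A] (f : ℕ → A)
    {n : ℕ} (h : f n = f 0) : ∑ k ∈ range n, f (k + 1) = ∑ k ∈ range n, f k := by
  apply add_right_cancel (b := f 0)
  rw [← sum_range_succ', sum_range_succ, h]

lemma pow_mul_eq_self_of_mul_eq_self {M : Type*} [Monoid M] {a x : M} (h : a * x = x) (n : ℕ) :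
    a ^ n * x = x := by
  induction n with
  | zero => rw [pow_zero, one_mul]
  | succ n ih => rw [pow_succ, mul_assoc, h, ih]

lemma isPrimitiveRoot_zetaU {j : ℕ} (hj : j ≠ 0) : IsPrimitiveRoot (zetaU j) j :=
  IsPrimitiveRoot.coe_units_iff.mp (Complex.isPrimitiveRoot_exp j hj)

lemma of_zetaU_mul_Eavg (j : ℕ) : MonoidAlgebra.of ℚ ℂˣ (zetaU j) * Eavg j = Eavg j := by
  have hj : zetaU j ^ j = zetaU j ^ 0 := by
    rcases eq_or_ne j 0 with rfl | hj
    · rfl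
    · rw [(isPrimitiveRoot_zetaU hj).pow_eq_one, pow_zero]
  rw [Eavg, mul_smul_comm, mul_sum]
  simp_rw [← map_mul, ← pow_succ']
  rw [sum_range_comp_succ_of_eq (fun k => MonoidAlgebra.of ℚ ℂˣ (zetaU j ^ k)) (by rw [hj])]

lemma of_mul_Eavg {j : ℕ} (hj : j ≠ 0) {z : ℂˣ} (hz : z ^ j = 1) :
    MonoidAlgebra.of ℚ ℂˣ z * Eavg j = Eavg j := by
  have : NeZero j := ⟨hj⟩
  obtain ⟨i, -, rfl⟩ := (isPrimitiveRoot_zetaU hj).eq_pow_of_mem_rootsOfUnity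
    ((mem_rootsOfUnity j z).mpr hz)
  rw [map_pow]
  exact pow_mul_eq_self_of_mul_eq_self (of_zetaU_mul_Eavg j) i

lemma Eavg_mul_eq_self {M : ℕ} (hM : M ≠ 0) {X : MonoidAlgebra ℚ ℂˣ}
    (h : ∀ z : ℂˣ, z ^ M = 1 → MonoidAlgebra.of ℚ ℂˣ z * X = X) : Eavg M * X = X := by
  have hroot : ∀ k, (zetaU M ^ k) ^ M = 1 := fun k => by
    rw [← pow_mul, mul_comm, pow_mul, (isPrimitiveRoot_zetaU hM).pow_eq_one, one_pow]
  rw [Eavg, smul_mul_assoc, sum_mul, sum_congr rfl fun k _ => h _ (hroot k), sum_const,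
    card_range, ← Nat.cast_smul_eq_nsmul ℚ, smul_smul, inv_mul_cancel₀ (Nat.cast_ne_zero.mpr hM),
    one_smul]

theorem Eavg_mul_Eavg {k l : ℕ} (hk : k ≠ 0) (hl : l ≠ 0) :
    Eavg k * Eavg l = Eavg (k.lcm l) := by
  set M := k.lcm l
  have hM : M ≠ 0 := Nat.lcm_ne_zero hk hl
  have absorb {j : ℕ} (hj : j ≠ 0) (hjM : j ∣ M) : Eavg j * Eavg M = Eavg M :=
    Eavg_mul_eq_self hj fun z hz => of_mul_Eavg hM <| by
      obtain ⟨c, hc⟩ := hjM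
      rw [hc, pow_mul, hz, one_pow]
  -- A primitive `M`-th root of the form `ζ_k^a ζ_l^b` fixes `E_k E_l`, hence so does every
  -- `M`-th root of unity.
  have hξ := (isPrimitiveRoot_zetaU hk).pow_mul_pow_lcm (isPrimitiveRoot_zetaU hl) hk hl
  set a := k / Nat.factorizationLCMLeft k l
  set b := l / Nat.factorizationLCMRight k l
  have hfix : MonoidAlgebra.of ℚ ℂˣ (zetaU k ^ a * zetaU l ^ b) * (Eavg k * Eavg l)
      = Eavg k * Eavg l := by
    rw [map_mul, map_pow, map_pow, mul_mul_mul_comm,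
      pow_mul_eq_self_of_mul_eq_self (of_zetaU_mul_Eavg k),
      pow_mul_eq_self_of_mul_eq_self (of_zetaU_mul_Eavg l)]
  have hMkl : Eavg M * (Eavg k * Eavg l) = Eavg k * Eavg l := by
    have : NeZero M := ⟨hM⟩
    refine Eavg_mul_eq_self hM fun z hz => ?_
    obtain ⟨i, -, rfl⟩ := hξ.eq_pow_of_mem_rootsOfUnity ((mem_rootsOfUnity M z).mpr hz)
    rw [map_pow]
    exact pow_mul_eq_self_of_mul_eq_self hfix i
  calc Eavg k * Eavg l = Eavg k * (Eavg l * Eavg M) := by rw [← hMkl]; ring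
    _ = Eavg M := by rw [absorb hl (Nat.dvd_lcm_right k l), absorb hk (Nat.dvd_lcm_left k l)]

section MoebiusSum

variable {K : Type*} [CommRing K]

def moebiusTransform (f : ℕ → K) (n : ℕ) : K :=
  ∑ d ∈ n.divisors, ((moebius (n / d) : ℤ) : K) * f d

lemma sum_smul_moebius_eq_moebiusTransform (f : ℕ → K) (n : ℕ) :
    ∑ x ∈ n.divisorsAntidiagonal, moebius x.1 • f x.2 = moebiusTransform f n := by
  rw [Nat.sum_divisorsAntidiagonal' fun i j => moebius i • f j, moebiusTransform]
  simp only [zsmul_eq_mul]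

lemma sum_divisors_moebiusTransform (f : ℕ → K) {n : ℕ} (hn : 0 < n) :
    ∑ d ∈ n.divisors, moebiusTransform f d = f n := by
  refine (sum_eq_iff_sum_smul_moebius_eq.mpr (fun m _ => ?_)) n hn
  exact sum_smul_moebius_eq_moebiusTransform f m

lemma eq_moebiusTransform_of_sum_divisors {f h : ℕ → K}
    (hsum : ∀ n, 0 < n → ∑ d ∈ n.divisors, h d = f n) {n : ℕ} (hn : 0 < n) :
    h n = moebiusTransform f n := by
  rw [← sum_smul_moebius_eq_moebiusTransform]
  exact (sum_eq_iff_sum_smul_moebius_eq.mp hsum n hn).symm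

lemma Nat.divisors_filter_dvd {m : ℕ} (hm : m ≠ 0) (n : ℕ) :
    {d ∈ m.divisors | d ∣ n} = (m.gcd n).divisors := by
  ext d
  simp only [mem_filter, Nat.mem_divisors, Nat.dvd_gcd_iff, ne_eq, Nat.gcd_eq_zero_iff, hm,
    false_and, not_false_eq_true, and_true]

variable {M : ℕ} {f : ℕ → K}

lemma sum_divisors_filter_dvd_moebiusTransform (hM : M ≠ 0) (hf : ∀ n, f (M.gcd n) = f n)
    (n : ℕ) : ∑ d ∈ M.divisors with d ∣ n, moebiusTransform f d = f n := by
  rw [Nat.divisors_filter_dvd hM, sum_divisors_moebiusTransform f (Nat.gcd_pos_of_pos_left n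
    (Nat.pos_of_ne_zero hM)), hf]

lemma moebiusTransform_eq_zero_of_not_dvd (hM : M ≠ 0) (hf : ∀ n, f (M.gcd n) = f n) {j : ℕ}
    (hj : ¬ j ∣ M) : moebiusTransform f j = 0 := by
  rcases Nat.eq_zero_or_pos j with rfl | hj0
  · simp [moebiusTransform]
  -- `f` depends only on `gcd M n`, so its transform is already determined by the divisors of `M`.
  have hsum : ∀ n, 0 < n → ∑ d ∈ n.divisors, (if d ∣ M then moebiusTransform f d else 0) = f n :=
    fun n hn => by
      rw [← sum_filter, Nat.divisors_filter_dvd hn.ne', Nat.gcd_comm, ← hf n,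
        sum_divisors_moebiusTransform f (Nat.gcd_pos_of_pos_left n (Nat.pos_of_ne_zero hM))]
  rw [← eq_moebiusTransform_of_sum_divisors hsum hj0, if_neg hj]

lemma sum_filter_lcm_eq_moebiusTransform_mul {g : ℕ → K} (hM : M ≠ 0) (hf : ∀ n, f (M.gcd n) = f n)
    (hg : ∀ n, g (M.gcd n) = g n) {l : ℕ} (hl : 0 < l) :
    ∑ p ∈ M.divisors ×ˢ M.divisors with p.1.lcm p.2 = l,
        moebiusTransform f p.1 * moebiusTransform g p.2 = moebiusTransform (f * g) l := by
  refine eq_moebiusTransform_of_sum_divisors (h := fun l => ∑ p ∈ M.divisors ×ˢ M.divisors with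
    p.1.lcm p.2 = l, moebiusTransform f p.1 * moebiusTransform g p.2) (fun n hn => ?_) hl
  have hfilter : {p ∈ M.divisors ×ˢ M.divisors | p.1.lcm p.2 ∈ n.divisors}
      = {d ∈ M.divisors | d ∣ n} ×ˢ {d ∈ M.divisors | d ∣ n} := by
    ext p
    simp only [mem_filter, mem_product, Nat.mem_divisors, Nat.lcm_dvd_iff, ne_eq, hn.ne',
      not_false_eq_true, and_true]
    tauto
  rw [sum_fiberwise_eq_sum_filter, hfilter, sum_product, ← sum_mul_sum,
    sum_divisors_filter_dvd_moebiusTransform hM hf,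
    sum_divisors_filter_dvd_moebiusTransform hM hg, Pi.mul_apply]

variable {R : Type*} [CommRing R] [Algebra K R] (E : ℕ → R)

def moebiusSum (M : ℕ) (f : ℕ → K) : R :=
  ∑ j ∈ M.divisors, moebiusTransform f j • E j

lemma moebiusSum_add (f g : ℕ → K) :
    moebiusSum E M (f + g) = moebiusSum E M f + moebiusSum E M g := by
  simp only [moebiusSum, moebiusTransform, Pi.add_apply, mul_add, sum_add_distrib, add_smul]

lemma moebiusSum_sub (f g : ℕ → K) :
    moebiusSum E M (f - g) = moebiusSum E M f - moebiusSum E M g := by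
  simp only [moebiusSum, moebiusTransform, Pi.sub_apply, mul_sub, sum_sub_distrib, sub_smul]

lemma moebiusSum_eq_of_dvd {N : ℕ} (hM : M ≠ 0) (hNM : N ∣ M) (hf : ∀ n, f (N.gcd n) = f n) :
    moebiusSum E N f = moebiusSum E M f := by
  have hN : N ≠ 0 := ne_zero_of_dvd_ne_zero hM hNM
  refine sum_subset (Nat.divisors_subset_of_dvd hM hNM) fun j _ hj => ?_
  rw [moebiusTransform_eq_zero_of_not_dvd hN hf (by simpa [hN] using hj), zero_smul]

lemma moebiusSum_mul (hE : ∀ j k, j ≠ 0 → k ≠ 0 → E j * E k = E (j.lcm k)) {g : ℕ → K}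
    (hM : M ≠ 0) (hf : ∀ n, f (M.gcd n) = f n) (hg : ∀ n, g (M.gcd n) = g n) :
    moebiusSum E M f * moebiusSum E M g = moebiusSum E M (f * g) := by
  have hlcm : ∀ p ∈ M.divisors ×ˢ M.divisors, p.1.lcm p.2 ∈ M.divisors := fun p hp => by
    simp only [mem_product, Nat.mem_divisors] at hp ⊢
    exact ⟨Nat.lcm_dvd hp.1.1 hp.2.1, hM⟩
  calc moebiusSum E M f * moebiusSum E M g
      = ∑ p ∈ M.divisors ×ˢ M.divisors,
          (moebiusTransform f p.1 * moebiusTransform g p.2) • E (p.1.lcm p.2) := by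
        rw [moebiusSum, moebiusSum, sum_mul_sum, sum_product]
        refine sum_congr rfl fun j hj => sum_congr rfl fun k hk => ?_
        rw [smul_mul_smul_comm,
          hE j k (Nat.pos_of_mem_divisors hj).ne' (Nat.pos_of_mem_divisors hk).ne']
    _ = ∑ l ∈ M.divisors, (∑ p ∈ M.divisors ×ˢ M.divisors with p.1.lcm p.2 = l,
          moebiusTransform f p.1 * moebiusTransform g p.2) • E l := by
        rw [← sum_fiberwise_of_maps_to hlcm]
        refine sum_congr rfl fun l _ => ?_
        rw [sum_smul]
        exact sum_congr rfl fun p hp => by rw [(mem_filter.mp hp).2]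
    _ = moebiusSum E M (f * g) :=
        sum_congr rfl fun l hl => by
          rw [sum_filter_lcm_eq_moebiusTransform_mul hM hf hg (Nat.pos_of_mem_divisors hl)]

end MoebiusSum

lemma lcmL_ne_zero {L : List ℕ} (hL : ∀ a ∈ L, 0 < a) : lcmL L ≠ 0 := by
  induction L with
  | nil => simp [lcmL]
  | cons a L ih =>
    simp only [List.mem_cons, forall_eq_or_imp] at hL
    exact Nat.lcm_ne_zero hL.1.ne' (ih hL.2)

lemma dvd_lcmL {L : List ℕ} {a : ℕ} (ha : a ∈ L) : a ∣ lcmL L := by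
  induction L with
  | nil => simp at ha
  | cons b L ih =>
    rcases List.mem_cons.mp ha with rfl | h
    · exact Nat.dvd_lcm_left _ _
    · exact (ih h).trans (Nat.dvd_lcm_right _ _)

lemma lcmL_dvd {L : List ℕ} {M : ℕ} (h : ∀ a ∈ L, a ∣ M) : lcmL L ∣ M := by
  induction L with
  | nil => exact one_dvd M
  | cons a L ih =>
    simp only [List.mem_cons, forall_eq_or_imp] at h
    exact Nat.lcm_dvd h.1 (ih h.2)

-- The coercion in `chiL` elaborates as a monadic lift of the filtered list; this unfolds it.
lemma chiL_eq_one_sub_prod (L : List ℕ) (n : ℕ) :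
    chiL L n = 1 - ((L.filter (· ∣ n)).map fun a : ℕ => 1 - (a : ℚ)).prod := by
  simp only [chiL, bind_pure_comp, List.map_eq_map, List.map_map]
  rfl

lemma chiL_gcd {L : List ℕ} {M : ℕ} (h : ∀ a ∈ L, a ∣ M) (n : ℕ) :
    chiL L (M.gcd n) = chiL L n := by
  simp only [chiL_eq_one_sub_prod, Nat.dvd_gcd_iff]
  congr 3
  exact List.filter_congr fun a ha => by simp [h a ha]

lemma chiL_append (L L' : List ℕ) (n : ℕ) :
    chiL (L ++ L') n = chiL L n + chiL L' n - chiL L n * chiL L' n := by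
  simp only [chiL_eq_one_sub_prod, List.filter_append, List.map_append, List.prod_append]
  ring

lemma deltaMO_eq_moebiusSum {L : List ℕ} {M : ℕ} (hM : M ≠ 0) (h : ∀ a ∈ L, a ∣ M) :
    deltaMO L = (-1 : ℚ) ^ L.length • (1 - moebiusSum Eavg M (chiL L)) := by
  rw [deltaMO, ← moebiusSum_eq_of_dvd Eavg hM (lcmL_dvd h) (chiL_gcd fun a => dvd_lcmL)]
  rfl

/-- The Milnor–Orlik multiplicativity lemma:
`δ(a_0,…,a_m) · δ(a_0',…,a_{m'}') = δ(a_0,…,a_m,a_0',…,a_{m'}')` in `ℚ[ℂ*]`. -/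
theorem stmt4 (L L' : List ℕ) (hL : ∀ a ∈ L, 0 < a) (hL' : ∀ a ∈ L', 0 < a) :
    deltaMO L * deltaMO L' = deltaMO (L ++ L') := by
  set M := lcmL (L ++ L')
  have hM : M ≠ 0 := lcmL_ne_zero fun a ha => (List.mem_append.mp ha).elim (hL a) (hL' a)
  have hLM : ∀ a ∈ L, a ∣ M := fun a ha => dvd_lcmL (List.mem_append_left L' ha)
  have hL'M : ∀ a ∈ L', a ∣ M := fun a ha => dvd_lcmL (List.mem_append_right L ha)
  have hchi : chiL (L ++ L') = chiL L + chiL L' - chiL L * chiL L' := funext (chiL_append L L')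
  rw [deltaMO_eq_moebiusSum hM hLM, deltaMO_eq_moebiusSum hM hL'M,
    deltaMO_eq_moebiusSum hM fun a => dvd_lcmL, smul_mul_smul_comm, ← pow_add,
    List.length_append, hchi, moebiusSum_sub, moebiusSum_add,
    ← moebiusSum_mul Eavg (fun j k => Eavg_mul_Eavg) hM (chiL_gcd hLM) (chiL_gcd hL'M)]
  congr 1
  ring
end

section
/- Let p be periodic with period p = lcm_j a_j and define integers r_d by s_d = d·r_d, where s_d arise from Möbius inversion of the Lefschetz numbers χ_j = 1 - ∏_{a_i|j}(1-a_i). Then the formal power series identity ∑_{j=1}^∞ (χ_j/j) t^j = -∑_{d | p} r_d log(1 - t^d) holds in ℚ[[t]], where χ_j depends only on j mod p via the divisibility pattern. -/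
/-!
Since `χ_j` only depends on `gcd(j, p)`, Möbius inversion gives `χ_m = ∑_{d ∣ gcd(m, p)} s_d
= ∑_{d ∣ p, d ∣ m} d r_d`. Dividing by `m`, this is the coefficient of `t^m` in
`∑_{d ∣ p} r_d ∑_{k ≥ 1} t^{dk}/k`, because `t^m` occurs in the `d`-th inner sum exactly when
`d ∣ m`, with coefficient `1/(m/d) = d/m`.
-/

open ArithmeticFunction

/-- The formal power series `log(1 - t^d) = -∑_{k≥1} t^{dk}/k` in `ℚ[[t]]`. -/
noncomputable def logOneSubPow (d : ℕ) : PowerSeries ℚ :=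
  PowerSeries.mk fun m => if m ≠ 0 ∧ d ∣ m then -(1 / ((m / d : ℕ) : ℚ)) else 0

open PowerSeries
open scoped ArithmeticFunction.Moebius

lemma coeff_logOneSubPow {d m : ℕ} (hm : m ≠ 0) :
    coeff m (logOneSubPow d) = if d ∣ m then -((d : ℚ) / m) else 0 := by
  by_cases hdm : d ∣ m
  · have hd : (d : ℚ) ≠ 0 := by exact_mod_cast ne_zero_of_dvd_ne_zero hm hdm
    rw [logOneSubPow, coeff_mk, if_pos ⟨hm, hdm⟩, if_pos hdm, Nat.cast_div hdm hd]
    field_simp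
  · rw [logOneSubPow, coeff_mk, if_neg (fun h => hdm h.2), if_neg hdm]

lemma coeff_zero_logOneSubPow (d : ℕ) : coeff 0 (logOneSubPow d) = 0 := by
  simp [logOneSubPow]

lemma Nat.divisors_gcd {m p : ℕ} (hm : m ≠ 0) (hp : p ≠ 0) :
    (m.gcd p).divisors = p.divisors.filter (· ∣ m) := by
  ext d
  have : m.gcd p ≠ 0 := Nat.gcd_ne_zero_left hm
  simp only [Nat.mem_divisors, Finset.mem_filter, Nat.dvd_gcd_iff]
  tauto

lemma sum_divisors_eq_of_eq_sum_moebius_mul {χ s : ℕ → ℤ}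
    (hs : ∀ j, 0 < j → s j = ∑ d ∈ j.divisors, μ (j / d) * χ d) {m : ℕ} (hm : 0 < m) :
    ∑ d ∈ m.divisors, s d = χ m := by
  revert m
  rw [sum_eq_iff_sum_mul_moebius_eq]
  intro j hj
  rw [hs j hj, ← Nat.sum_divisorsAntidiagonal' (fun x y => (μ x : ℤ) * χ y)]
  simp

theorem mk_div_eq_neg_sum_smul_logOneSubPow {p : ℕ} (hp : p ≠ 0) {χ s r : ℕ → ℤ}
    (hχ : ∀ j, 0 < j → χ j = χ (j.gcd p))
    (hs : ∀ j, 0 < j → s j = ∑ d ∈ j.divisors, μ (j / d) * χ d)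
    (hr : ∀ d, 0 < d → s d = d * r d) :
    (mk fun j => if j = 0 then 0 else ((χ j : ℚ) / j))
      = -∑ d ∈ p.divisors, (r d : ℚ) • logOneSubPow d := by
  ext m
  rw [coeff_mk, map_neg, map_sum]
  rcases Nat.eq_zero_or_pos m with rfl | hm
  · simp [coeff_zero_logOneSubPow]
  have hχm : χ m = ∑ d ∈ p.divisors.filter (· ∣ m), d * r d := by
    rw [hχ m hm, ← sum_divisors_eq_of_eq_sum_moebius_mul hs (Nat.gcd_pos_of_pos_left p hm),
      Nat.divisors_gcd hm.ne' hp]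
    exact Finset.sum_congr rfl fun d hd =>
      hr d (Nat.pos_of_mem_divisors (Finset.mem_filter.mp hd).1)
  simp only [coeff_smul, coeff_logOneSubPow hm.ne', smul_eq_mul, mul_ite, mul_zero,
    ← Finset.sum_filter, if_neg hm.ne', hχm]
  push_cast
  rw [Finset.sum_div, ← Finset.sum_neg_distrib]
  refine Finset.sum_congr rfl fun d _ => ?_
  ring

lemma Finset.filter_dvd_gcd_lcm {ι : Type*} [Fintype ι] (a : ι → ℕ) (j : ℕ) :
    univ.filter (a · ∣ j.gcd (univ.lcm a)) = univ.filter (a · ∣ j) :=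
  filter_congr fun i _ =>
    ⟨fun h => h.trans (Nat.gcd_dvd_left _ _),
      fun h => Nat.dvd_gcd h (dvd_lcm (mem_univ i))⟩

/-- With `χ_j = 1 - ∏_{a_i ∣ j}(1 - a_i)` periodic with period `p = lcm_j a_j`,
`s_d` its Möbius transform, and `s_d = d·r_d`, one has the formal power series identity
`∑_{j≥1} (χ_j/j) t^j = -∑_{d ∣ p} r_d log(1 - t^d)` in `ℚ[[t]]`. -/
theorem stmt8 (n : ℕ) (a : Fin (n + 1) → ℕ) (ha : ∀ j, 0 < a j)
    (χ s r : ℕ → ℤ)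
    (hχ : ∀ j : ℕ, 0 < j →
      χ j = 1 - ∏ i ∈ Finset.univ.filter (fun i => a i ∣ j), (1 - (a i : ℤ)))
    (hs : ∀ j : ℕ, 0 < j →
      s j = ∑ d ∈ j.divisors, (ArithmeticFunction.moebius (j / d)) * χ d)
    (hr : ∀ d : ℕ, 0 < d → s d = (d : ℤ) * r d) :
    (PowerSeries.mk fun j => if j = 0 then 0 else ((χ j : ℚ) / (j : ℚ)))
      = -∑ d ∈ (Finset.lcm Finset.univ a).divisors, (r d : ℚ) • logOneSubPow d := by
  have hp : Finset.univ.lcm a ≠ 0 := by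
    simpa [Finset.lcm_eq_zero_iff] using fun i => (ha i).ne'
  refine mk_div_eq_neg_sum_smul_logOneSubPow hp (fun j hj => ?_) hs hr
  rw [hχ j hj, hχ _ (Nat.gcd_pos_of_pos_right j (Nat.pos_of_ne_zero hp)),
    Finset.filter_dvd_gcd_lcm]
end

section
/- For k ≥ 2, the Brieskorn 5-manifold Σ(p,3,3,3) with gcd(p,3) = 1 has H_2(Σ(p,3,3,3); ℤ) ≅ ℤ_p ⊕ ℤ_p, as computed by Randell's algorithm: the quantities C(I_s) defined recursively by C(∅) = gcd of all exponents and C(I_s) = gcd_{i ∈ I∖I_s}(a_i) / ∏_{I_t ⊊ I_s} C(I_t) satisfy C({0}) = 3, C({1,2,3}) = p, and C(I_s) = 1 for all other proper subsets I_s of {0,1,2,3}, with d_1 = d_2 = p. -/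
/-!
Randell's recursion says exactly that `∏_{J ⊆ I} C(J) = gcd_{i ∉ I} a_i` for every proper `I`,
so `C` is determined by these gcds. For `(p,3,3,3)` with `p` prime to `3`, the gcd over the
complement of `I` is `3` if `0 ∈ I`, `p` if `I = {1,2,3}` and `1` otherwise, which is the product
over the subsets of `I` of the claimed values of `C`.

In `κ(I)` with `0 ∈ I`, the term of `J ∪ {0}` cancels that of `J`, since `p` is coprime to the
other exponents; without `0` the terms depend only on `|J|`, giving `κ({i}) = 0` and
`κ({1,2,3}) = 2`. So `{1,2,3}` is the only set with `k ≥ 1`, and `d_1 = d_2 = C({1,2,3}) = p`.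
-/

/-- The exponents `(p,3,3,3)` of the Brieskorn manifold `Σ(p,3,3,3)`. -/
def aBr (p : ℕ) : Fin 4 → ℕ := ![p, 3, 3, 3]

/-- `κ(I_s) = ∑_{I_t ⊆ I_s} (-1)^{s-t} (∏_{i ∈ I_t} a_i) / lcm_{i ∈ I_t} a_i`. -/
noncomputable def kappaBr (p : ℕ) (I : Finset (Fin 4)) : ℚ :=
  ∑ J ∈ I.powerset,
    (-1 : ℚ) ^ (I.card - J.card) * (∏ i ∈ J, (aBr p i : ℚ)) / ((J.lcm (aBr p) : ℕ) : ℚ)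

/-- `k(I_s) = κ(I_s)` if `n+1-s` is odd, and `0` otherwise (here `n+1 = 4`). -/
noncomputable def kBr (p : ℕ) (I : Finset (Fin 4)) : ℚ :=
  if (4 - I.card) % 2 = 1 then kappaBr p I else 0

/-- `d_j = ∏_{I_s : k(I_s) ≥ j} C(I_s)`. -/
noncomputable def dBr (p : ℕ) (C : Finset (Fin 4) → ℚ) (j : ℕ) : ℚ :=
  ∏ I ∈ (Finset.univ : Finset (Finset (Fin 4))).filter (fun I => (j : ℚ) ≤ kBr p I), C I

open Finset

theorem eq_of_prod_powerset_erase_recursion {α K : Type*} [Fintype α] [DecidableEq α] [Field K]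
    {C D : Finset α → K} (hD : ∀ I, D I ≠ 0)
    (hC : ∀ I, I ≠ univ → C I = (∏ J ∈ I.powerset, D J) / ∏ J ∈ I.powerset.erase I, C J) :
    ∀ I, I ≠ univ → C I = D I := by
  intro I
  induction I using Finset.strongInduction with
  | H I ih =>
    intro hI
    have hlower : ∏ J ∈ I.powerset.erase I, C J = ∏ J ∈ I.powerset.erase I, D J := by
      refine prod_congr rfl fun J hJ => ?_
      have hJI : J ⊂ I := ssubset_of_subset_of_ne (mem_powerset.1 (mem_of_mem_erase hJ))
        (ne_of_mem_erase hJ)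
      exact ih J hJI (hJI.trans_le (subset_univ I)).ne
    rw [hC I hI, hlower, ← mul_prod_erase _ _ (mem_powerset_self I),
      mul_div_cancel_right₀ _ (prod_ne_zero_iff.2 fun J _ => hD J)]

section Brieskorn

variable {p : ℕ}

lemma aBr_of_ne_zero {i : Fin 4} (hi : i ≠ 0) : aBr p i = 3 := by
  fin_cases i <;> simp_all [aBr]

lemma gcd_aBr_of_zero_notMem {S : Finset (Fin 4)} (hS : S.Nonempty) (h0 : 0 ∉ S) :
    S.gcd (aBr p) = 3 := by
  obtain ⟨i, hi⟩ := hS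
  refine Nat.dvd_antisymm ?_ (dvd_gcd fun j hj => ?_)
  · simpa [aBr_of_ne_zero (ne_of_mem_of_not_mem hi h0)] using gcd_dvd (f := aBr p) hi
  · rw [aBr_of_ne_zero (ne_of_mem_of_not_mem hj h0)]

lemma gcd_aBr_of_zero_mem (hp : p.Coprime 3) {S : Finset (Fin 4)} (h0 : 0 ∈ S) (hS : S ≠ {0}) :
    S.gcd (aBr p) = 1 := by
  obtain ⟨i, hi, hi0⟩ : ∃ i ∈ S, i ≠ 0 := by
    by_contra! h
    exact hS (eq_singleton_iff_unique_mem.2 ⟨h0, h⟩)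
  have hdvd : S.gcd (aBr p) ∣ Nat.gcd p 3 :=
    Nat.dvd_gcd (gcd_dvd (f := aBr p) h0) (aBr_of_ne_zero hi0 ▸ gcd_dvd hi)
  exact Nat.eq_one_of_dvd_one (hp.gcd_eq_one ▸ hdvd)

lemma gcd_aBr_singleton_zero : ({0} : Finset (Fin 4)).gcd (aBr p) = p := by
  simp [aBr]

/-- The claimed values of Randell's `C(I_s)` for `Σ(p,3,3,3)`. -/
def cBr (p : ℕ) (I : Finset (Fin 4)) : ℚ :=
  if I = {0} then 3 else if I = {1, 2, 3} then p else 1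

lemma cBr_eq_mul (I : Finset (Fin 4)) :
    cBr p I = (if I = {0} then 3 else 1) * (if I = {1, 2, 3} then (p : ℚ) else 1) := by
  by_cases h : I = {0}
  · simp [cBr, h, show ({0} : Finset (Fin 4)) ≠ {1, 2, 3} by decide]
  · simp [cBr, h]

lemma prod_powerset_cBr (I : Finset (Fin 4)) :
    ∏ J ∈ I.powerset, cBr p J =
      (if 0 ∈ I then 3 else 1) * (if {1, 2, 3} ⊆ I then (p : ℚ) else 1) := by
  simp only [cBr_eq_mul, prod_mul_distrib, prod_ite_eq', mem_powerset, singleton_subset_iff]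

lemma gcd_compl_aBr_eq_prod_powerset_cBr (hp : p.Coprime 3) {I : Finset (Fin 4)} (hI : I ≠ univ) :
    (((univ \ I).gcd (aBr p) : ℕ) : ℚ) = ∏ J ∈ I.powerset, cBr p J := by
  rw [prod_powerset_cBr]
  by_cases h0 : 0 ∈ I
  · have h123 : ¬ {1, 2, 3} ⊆ I := fun h =>
      hI (univ_subset_iff.1 (show (univ : Finset (Fin 4)) = {0, 1, 2, 3} by decide ▸
        insert_subset h0 h))
    rw [if_pos h0, if_neg h123, mul_one, gcd_aBr_of_zero_notMem
      (sdiff_nonempty.2 fun h => hI (univ_subset_iff.1 h)) (by simpa using h0), Nat.cast_ofNat]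
  by_cases h123 : {1, 2, 3} ⊆ I
  · have hI123 : I = {1, 2, 3} := h123.antisymm' fun i hi => by
      fin_cases i <;> simp_all
    rw [if_neg h0, if_pos h123, one_mul, hI123, show univ \ {1, 2, 3} = ({0} : Finset (Fin 4)) by
      decide, gcd_aBr_singleton_zero]
  · have hne : univ \ I ≠ {0} := fun h => h123 fun i hi => by
      by_contra hiI
      have : i ∈ univ \ I := by simpa using hiI
      rw [h, mem_singleton] at this
      subst this
      simp at hi
    rw [if_neg h0, if_neg h123, one_mul, gcd_aBr_of_zero_mem hp (by simpa using h0) hne,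
      Nat.cast_one]

lemma ne_zero_of_coprime_three (hp : p.Coprime 3) : p ≠ 0 := by
  rintro rfl
  simp at hp

lemma eq_cBr_of_randell_recursion (hp : p.Coprime 3) {C : Finset (Fin 4) → ℚ}
    (hC0 : C ∅ = ((univ.gcd (aBr p) : ℕ) : ℚ))
    (hC : ∀ I : Finset (Fin 4), I ≠ ∅ → I ≠ univ →
      C I = (((univ \ I).gcd (aBr p) : ℕ) : ℚ) / ∏ J ∈ I.powerset.erase I, C J)
    {I : Finset (Fin 4)} (hI : I ≠ univ) : C I = cBr p I := by
  have hcBr : ∀ J, cBr p J ≠ 0 := fun J => by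
    unfold cBr
    split_ifs <;> simp [ne_zero_of_coprime_three hp]
  refine eq_of_prod_powerset_erase_recursion hcBr (fun J hJ => ?_) I hI
  rw [← gcd_compl_aBr_eq_prod_powerset_cBr hp hJ]
  rcases eq_or_ne J ∅ with rfl | hJ0
  · simp [hC0]
  · exact hC J hJ0 hJ

lemma prod_div_lcm_aBr_insert_zero (hp : p.Coprime 3) {J : Finset (Fin 4)} (hJ : 0 ∉ J) :
    (∏ i ∈ insert 0 J, (aBr p i : ℚ)) / (((insert 0 J).lcm (aBr p) : ℕ) : ℚ) =
      (∏ i ∈ J, (aBr p i : ℚ)) / ((J.lcm (aBr p) : ℕ) : ℚ) := by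
  have hdvd : J.lcm (aBr p) ∣ 3 := lcm_dvd fun i hi => by
    rw [aBr_of_ne_zero (ne_of_mem_of_not_mem hi hJ)]
  have hlcm : (insert 0 J).lcm (aBr p) = p * J.lcm (aBr p) := by
    rw [lcm_insert, show aBr p 0 = p from rfl, lcm_eq_nat_lcm,
      (hp.coprime_dvd_right hdvd).lcm_eq_mul]
  rw [prod_insert hJ, hlcm, Nat.cast_mul, show (aBr p 0 : ℚ) = p from rfl,
    mul_div_mul_left _ _ (Nat.cast_ne_zero.2 (ne_zero_of_coprime_three hp))]

lemma kappaBr_of_zero_mem (hp : p.Coprime 3) {I : Finset (Fin 4)} (h0 : 0 ∈ I) :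
    kappaBr p I = 0 := by
  have hs : 0 ∉ I.erase 0 := notMem_erase 0 I
  rw [kappaBr, ← insert_erase h0, sum_powerset_insert hs, ← sum_add_distrib]
  refine sum_eq_zero fun J hJ => ?_
  have hJs : 0 ∉ J := fun h => hs (mem_powerset.1 hJ h)
  have hcard : #J ≤ #(I.erase 0) := card_le_card (mem_powerset.1 hJ)
  rw [card_insert_of_notMem hs, card_insert_of_notMem hJs, mul_div_assoc, mul_div_assoc,
    prod_div_lcm_aBr_insert_zero hp hJs, Nat.add_sub_add_right, Nat.sub_add_comm hcard, pow_succ]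
  ring

-- `3 ^ (0 - 1) = 1` is also the right value at `J = ∅`.
lemma prod_div_lcm_aBr_of_zero_notMem {J : Finset (Fin 4)} (hJ : 0 ∉ J) :
    (∏ i ∈ J, (aBr p i : ℚ)) / ((J.lcm (aBr p) : ℕ) : ℚ) = 3 ^ (#J - 1) := by
  have haBr : ∀ i ∈ J, aBr p i = 3 := fun i hi => aBr_of_ne_zero (ne_of_mem_of_not_mem hi hJ)
  rcases J.eq_empty_or_nonempty with rfl | ⟨i, hi⟩
  · simp
  have hlcm : J.lcm (aBr p) = 3 :=
    Nat.dvd_antisymm (lcm_dvd fun j hj => (haBr j hj).dvd) (haBr i hi ▸ dvd_lcm hi)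
  rw [prod_congr rfl fun j hj => congrArg (Nat.cast (R := ℚ)) (haBr j hj), prod_const, hlcm,
    ← Nat.sub_add_cancel (card_pos.2 ⟨i, hi⟩), pow_succ, Nat.add_sub_cancel]
  norm_num

lemma kappaBr_of_zero_notMem {I : Finset (Fin 4)} (h0 : 0 ∉ I) :
    kappaBr p I = ∑ k ∈ range (#I + 1), ((#I).choose k : ℚ) * ((-1) ^ (#I - k) * 3 ^ (k - 1)) := by
  have hterm : ∀ J ∈ I.powerset, (-1 : ℚ) ^ (#I - #J) * (∏ i ∈ J, (aBr p i : ℚ)) /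
      ((J.lcm (aBr p) : ℕ) : ℚ) = (-1) ^ (#I - #J) * 3 ^ (#J - 1) := fun J hJ => by
    rw [mul_div_assoc, prod_div_lcm_aBr_of_zero_notMem fun h => h0 (mem_powerset.1 hJ h)]
  rw [kappaBr, sum_congr rfl hterm,
    sum_powerset_apply_card (fun k => (-1 : ℚ) ^ (#I - k) * 3 ^ (k - 1))]
  simp only [nsmul_eq_mul]

lemma kBr_eq (hp : p.Coprime 3) (I : Finset (Fin 4)) :
    kBr p I = if I = {1, 2, 3} then 2 else 0 := by
  have hodd : ∀ I : Finset (Fin 4), (4 - #I) % 2 = 1 → 0 ∉ I → I ≠ {1, 2, 3} → #I = 1 := by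
    decide
  unfold kBr
  split_ifs with h4 hI hI
  · rw [hI, kappaBr_of_zero_notMem (by decide), show #({1, 2, 3} : Finset (Fin 4)) = 3 from rfl]
    norm_num [sum_range_succ]
  · by_cases h0 : 0 ∈ I
    · exact kappaBr_of_zero_mem hp h0
    · rw [kappaBr_of_zero_notMem h0, hodd I h4 h0 hI]
      simp [sum_range_succ]
  · exact absurd (hI ▸ h4) (by decide)
  · rfl

lemma filter_le_kBr (hp : p.Coprime 3) {j : ℕ} (hj1 : 1 ≤ j) (hj2 : j ≤ 2) :
    univ.filter (fun I => (j : ℚ) ≤ kBr p I) = {{1, 2, 3}} := by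
  ext I
  rw [mem_filter_univ, kBr_eq hp, mem_singleton]
  split_ifs with hI
  · exact iff_of_true (by exact_mod_cast hj2) hI
  · exact iff_of_false (not_le.2 (Nat.cast_pos.2 hj1)) hI

lemma dBr_eq (hp : p.Coprime 3) (C : Finset (Fin 4) → ℚ) {j : ℕ} (hj1 : 1 ≤ j) (hj2 : j ≤ 2) :
    dBr p C j = C {1, 2, 3} := by
  rw [dBr, filter_le_kBr hp hj1 hj2, prod_singleton]

end Brieskorn

theorem stmt10_general (p : ℕ) (hgcd : Nat.gcd p 3 = 1)
    (C : Finset (Fin 4) → ℚ)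
    (hC0 : C ∅ = ((Finset.gcd Finset.univ (aBr p) : ℕ) : ℚ))
    (hC : ∀ I : Finset (Fin 4), I ≠ ∅ → I ≠ Finset.univ →
      C I = ((Finset.gcd (Finset.univ \ I) (aBr p) : ℕ) : ℚ) /
        ∏ J ∈ I.powerset.erase I, C J) :
    C {0} = 3 ∧ C ({1, 2, 3} : Finset (Fin 4)) = p ∧
    (∀ I : Finset (Fin 4), I ≠ Finset.univ → I ≠ ({0} : Finset (Fin 4)) →
      I ≠ ({1, 2, 3} : Finset (Fin 4)) → C I = 1) ∧
    dBr p C 1 = p ∧ dBr p C 2 = p := by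
  have hCeq : ∀ I, I ≠ univ → C I = cBr p I := fun _ => eq_cBr_of_randell_recursion hgcd hC0 hC
  have hC123 : C {1, 2, 3} = p := by
    rw [hCeq _ (by decide), cBr, if_neg (by decide), if_pos rfl]
  refine ⟨?_, hC123, fun I hI h0 h123 => ?_, ?_, ?_⟩
  · rw [hCeq _ (by decide), cBr, if_pos rfl]
  · rw [hCeq I hI, cBr, if_neg h0, if_neg h123]
  · rw [dBr_eq hgcd C le_rfl one_le_two, hC123]
  · rw [dBr_eq hgcd C one_le_two le_rfl, hC123]

/-- Randell's algorithm for `Σ(p,3,3,3)` with `gcd(p,3) = 1`: the recursively defined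
quantities satisfy `C({0}) = 3`, `C({1,2,3}) = p`, `C(I_s) = 1` for all other proper
subsets, and `d_1 = d_2 = p` (whence `H_2(Σ(p,3,3,3);ℤ) ≅ ℤ_p ⊕ ℤ_p`). -/
theorem stmt10 (p : ℕ) (hp : 2 ≤ p) (hgcd : Nat.gcd p 3 = 1)
    (C : Finset (Fin 4) → ℚ)
    (hC0 : C ∅ = ((Finset.gcd Finset.univ (aBr p) : ℕ) : ℚ))
    (hC : ∀ I : Finset (Fin 4), I ≠ ∅ → I ≠ Finset.univ →
      C I = ((Finset.gcd (Finset.univ \ I) (aBr p) : ℕ) : ℚ) /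
        ∏ J ∈ I.powerset.erase I, C J) :
    C {0} = 3 ∧ C ({1, 2, 3} : Finset (Fin 4)) = p ∧
    (∀ I : Finset (Fin 4), I ≠ Finset.univ → I ≠ ({0} : Finset (Fin 4)) →
      I ≠ ({1, 2, 3} : Finset (Fin 4)) → C I = 1) ∧
    dBr p C 1 = p ∧ dBr p C 2 = p :=
  stmt10_general p hgcd C hC0 hC
end
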